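/- arXiv:2206.09383 — 5 statements merged into one kernel-verified Lean document; each statement's English description precedes it below -/
import Mathlib

section
/- Let a > 0 and x > 0, and set φ = arctan x and b = π²/(a(1+x²)). Then the generalised Poisson–Jacobi transformation ∑_{n=1}^∞ e^{-an²} cos(an²x) = (1/2)√(π/a) · cos(φ/2)/(1+x²)^{1/4} - 1/2 + √(π/a) · (1+x²)^{-1/4} ∑_{n=1}^∞ e^{-b n²} cos(b n² x - φ/2) holds, with both series absolutely convergent. -/
/-!
With `τ = a (x + i) / π` the left-hand series is `Re ((θ(τ) - 1) / 2)` for Jacobi's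
`θ(τ) = ∑_{n ∈ ℤ} exp (π i n² τ)`. The modular relation `θ(-1/τ) = (-iτ)^{1/2} θ(τ)` applies with
`-1/τ = b (-x + i) / π` and `-iτ = (a/π) √(1 + x²) e^{-iφ}`, so `(-iτ)^{-1/2}` is
`√(π/a) (1 + x²)^{-1/4} e^{iφ/2}`; taking real parts gives the identity. Absolute convergence is
free, since a real series that converges unconditionally converges absolutely.
-/

open Real

section

open Complex

theorem ofReal_mul_exp_mul_I_cpow {r θ : ℝ} (hr : 0 < r) (hθ : θ ∈ Set.Ioc (-π) π) (y : ℝ) :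
    ((r : ℂ) * cexp (θ * I)) ^ (y : ℂ) = ((r ^ y : ℝ) : ℂ) * cexp ((θ * y : ℝ) * I) := by
  have hpolar : (r : ℂ) * cexp (θ * I) = cexp ((Real.log r : ℂ) + θ * I) := by
    rw [Complex.exp_add, ← ofReal_exp, Real.exp_log hr]
  rw [hpolar, cpow_def_of_ne_zero (Complex.exp_ne_zero _),
    Complex.log_exp (by simpa using hθ.1) (by simpa using hθ.2), Real.rpow_def_of_pos hr,
    ofReal_exp, ← Complex.exp_add]
  push_cast
  ring_nf

theorem neg_I_mul_ofReal_mul_ofReal_add_I_div_pi (c s : ℝ) :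
    -I * (c * (s + I) / π) =
      ((c / π * √(1 + s ^ 2) : ℝ) : ℂ) * cexp ((-Real.arctan s : ℝ) * I) := by
  rw [Complex.exp_mul_I, ← ofReal_cos, ← ofReal_sin, Real.cos_neg, Real.sin_neg,
    Real.cos_arctan, Real.sin_arctan]
  apply Complex.ext <;> simp <;> field_simp

theorem neg_ofReal_mul_ofReal_add_I_div_pi_inv {c : ℝ} (hc : c ≠ 0) (s : ℝ) :
    (-(c * (s + I) / π))⁻¹ = ((π ^ 2 / (c * (1 + s ^ 2)) : ℝ) : ℂ) * ((-s : ℝ) + I) / π := by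
  have hc' : (c : ℂ) ≠ 0 := by exact_mod_cast hc
  have hs : (1 + s ^ 2 : ℂ) ≠ 0 := by exact_mod_cast (by positivity : (1 + s ^ 2 : ℝ) ≠ 0)
  have hπ : (π : ℂ) ≠ 0 := by exact_mod_cast Real.pi_ne_zero
  apply inv_eq_of_mul_eq_one_right
  push_cast
  field_simp
  linear_combination -Complex.I_sq

theorem jacobiTheta_ofReal_mul_ofReal_add_I_div_pi {c : ℝ} (hc : 0 < c) (s : ℝ) :
    jacobiTheta (c * (s + I) / π) =
      ((√(π / c) * (1 + s ^ 2) ^ (-(1 : ℝ) / 4) : ℝ) : ℂ) * cexp ((Real.arctan s / 2 : ℝ) * I) *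
        jacobiTheta (((π ^ 2 / (c * (1 + s ^ 2)) : ℝ) : ℂ) * ((-s : ℝ) + I) / π) := by
  set τ : ℂ := c * (s + I) / π
  have hτ : 0 < τ.im := by simp [τ]; positivity
  have hS := jacobiTheta_S_smul ⟨τ, hτ⟩
  rw [UpperHalfPlane.modular_S_smul, UpperHalfPlane.coe_mk, UpperHalfPlane.coe_mk,
    neg_ofReal_mul_ofReal_add_I_div_pi_inv hc.ne'] at hS
  have hmod :
      (c / π * √(1 + s ^ 2)) ^ (-(1 : ℝ) / 2) = √(π / c) * (1 + s ^ 2) ^ (-(1 : ℝ) / 4) := by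
    rw [Real.mul_rpow (by positivity) (by positivity), Real.sqrt_eq_rpow, Real.sqrt_eq_rpow,
      ← Real.rpow_mul (by positivity), neg_div, Real.rpow_neg (by positivity),
      ← Real.inv_rpow (by positivity), inv_div]
    norm_num
  have hroot : (-I * τ) ^ (-(1 / 2) : ℂ) =
      ((√(π / c) * (1 + s ^ 2) ^ (-(1 : ℝ) / 4) : ℝ) : ℂ) * cexp ((Real.arctan s / 2 : ℝ) * I) := by
    have harctan := Real.arctan_mem_Ioo s
    rw [neg_I_mul_ofReal_mul_ofReal_add_I_div_pi,
      show (-(1 / 2) : ℂ) = ((-(1 : ℝ) / 2 : ℝ) : ℂ) by push_cast; ring,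
      ofReal_mul_exp_mul_I_cpow (by positivity) ⟨by linarith [harctan.2, Real.pi_pos],
        by linarith [harctan.1, Real.pi_pos]⟩, hmod]
    congr 4
    ring
  have hne : (-I * τ) ^ (1 / 2 : ℂ) ≠ 0 := by
    rw [cpow_ne_zero_iff_of_exponent_ne_zero (by norm_num)]
    exact mul_ne_zero (neg_ne_zero.mpr I_ne_zero) (fun h => by simp [h] at hτ)
  rw [hS, ← mul_assoc, ← hroot, cpow_neg, inv_mul_cancel₀ hne, one_mul]

theorem hasSum_exp_mul_cos_re_jacobiTheta {c : ℝ} (hc : 0 < c) (s ψ : ℝ) :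
    HasSum (fun n : ℕ =>
        Real.exp (-c * ((n : ℝ) + 1) ^ 2) * Real.cos (c * ((n : ℝ) + 1) ^ 2 * s + ψ))
      (cexp (ψ * I) * ((jacobiTheta (c * (s + I) / π) - 1) / 2)).re := by
  have hτ : 0 < (c * (s + I) / π : ℂ).im := by simp; positivity
  convert Complex.hasSum_re ((hasSum_nat_jacobiTheta hτ).mul_left (cexp (ψ * I))) using 1
  funext n
  have hπ : (π : ℂ) ≠ 0 := by exact_mod_cast Real.pi_ne_zero
  have hexponent : ψ * I + π * I * ((n : ℂ) + 1) ^ 2 * (c * (s + I) / π) =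
      ((-c * ((n : ℝ) + 1) ^ 2 : ℝ) : ℂ) + ((c * ((n : ℝ) + 1) ^ 2 * s + ψ : ℝ) : ℂ) * I := by
    push_cast
    field_simp
    linear_combination (c * ((n : ℂ) + 1) ^ 2) * I_sq
  rw [← Complex.exp_add, hexponent, Complex.exp_add, ← ofReal_exp, re_ofReal_mul,
    exp_ofReal_mul_I_re]

end

theorem stmt_5_general (a x φ b : ℝ) (ha : 0 < a) (hφ : φ = Real.arctan x)
    (hb : b = π ^ 2 / (a * (1 + x ^ 2))) :
    Summable (fun n : ℕ =>
      |Real.exp (-a * ((n : ℝ) + 1) ^ 2) * Real.cos (a * ((n : ℝ) + 1) ^ 2 * x)|) ∧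
    Summable (fun n : ℕ =>
      |Real.exp (-b * ((n : ℝ) + 1) ^ 2) * Real.cos (b * ((n : ℝ) + 1) ^ 2 * x - φ / 2)|) ∧
    ∑' n : ℕ, Real.exp (-a * ((n : ℝ) + 1) ^ 2) * Real.cos (a * ((n : ℝ) + 1) ^ 2 * x) =
      (1 / 2) * Real.sqrt (π / a) * Real.cos (φ / 2) / (1 + x ^ 2) ^ ((1 : ℝ) / 4) - 1 / 2 +
        Real.sqrt (π / a) * (1 + x ^ 2) ^ (-(1 : ℝ) / 4) *
          ∑' n : ℕ, Real.exp (-b * ((n : ℝ) + 1) ^ 2) *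
            Real.cos (b * ((n : ℝ) + 1) ^ 2 * x - φ / 2) := by
  have hb0 : 0 < b := hb ▸ by positivity
  have hA := hasSum_exp_mul_cos_re_jacobiTheta ha x 0
  simp only [add_zero, Complex.ofReal_zero, zero_mul, Complex.exp_zero, one_mul] at hA
  have hB : HasSum (fun n : ℕ =>
      Real.exp (-b * ((n : ℝ) + 1) ^ 2) * Real.cos (b * ((n : ℝ) + 1) ^ 2 * x - φ / 2))
      (Complex.exp ((φ / 2 : ℝ) * Complex.I) *
        ((jacobiTheta (b * ((-x : ℝ) + Complex.I) / π) - 1) / 2)).re := by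
    convert hasSum_exp_mul_cos_re_jacobiTheta hb0 (-x) (φ / 2) using 3 with n
    rw [← Real.cos_neg]
    ring_nf
  refine ⟨summable_abs_iff.mpr hA.summable, summable_abs_iff.mpr hB.summable, ?_⟩
  rw [hA.tsum_eq, hB.tsum_eq, jacobiTheta_ofReal_mul_ofReal_add_I_div_pi ha, ← hb, ← hφ]
  set E := Complex.exp ((φ / 2 : ℝ) * Complex.I)
  set T := jacobiTheta (b * ((-x : ℝ) + Complex.I) / π)
  set K := √(π / a) * (1 + x ^ 2) ^ (-(1 : ℝ) / 4) with hK
  have hE : E.re = Real.cos (φ / 2) := Complex.exp_ofReal_mul_I_re _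
  rw [show ((K : ℂ) * E * T - 1) / 2 = K * (E * ((T - 1) / 2)) + (K * E - 1) / 2 by ring,
    Complex.add_re, Complex.re_ofReal_mul, Complex.div_ofNat_re, Complex.sub_re,
    Complex.re_ofReal_mul, hE, Complex.one_re, hK, neg_div, Real.rpow_neg (by positivity)]
  ring

theorem stmt_5 (a x φ b : ℝ) (ha : 0 < a) (hx : 0 < x) (hφ : φ = Real.arctan x)
    (hb : b = π ^ 2 / (a * (1 + x ^ 2))) :
    Summable (fun n : ℕ =>
      |Real.exp (-a * ((n : ℝ) + 1) ^ 2) * Real.cos (a * ((n : ℝ) + 1) ^ 2 * x)|) ∧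
    Summable (fun n : ℕ =>
      |Real.exp (-b * ((n : ℝ) + 1) ^ 2) * Real.cos (b * ((n : ℝ) + 1) ^ 2 * x - φ / 2)|) ∧
    ∑' n : ℕ, Real.exp (-a * ((n : ℝ) + 1) ^ 2) * Real.cos (a * ((n : ℝ) + 1) ^ 2 * x) =
      (1 / 2) * Real.sqrt (π / a) * Real.cos (φ / 2) / (1 + x ^ 2) ^ ((1 : ℝ) / 4) - 1 / 2 +
        Real.sqrt (π / a) * (1 + x ^ 2) ^ (-(1 : ℝ) / 4) *
          ∑' n : ℕ, Real.exp (-b * ((n : ℝ) + 1) ^ 2) *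
            Real.cos (b * ((n : ℝ) + 1) ^ 2 * x - φ / 2) :=
  stmt_5_general a x φ b ha hφ hb
end

section
/- Let a > 0 and x > 0, and set φ = arctan x and b = π²/(a(1+x²)). Then ∑_{n=1}^∞ e^{-an²} sin(an²x) = (1/2)√(π/a) · sin(φ/2)/(1+x²)^{1/4} - √(π/a) · (1+x²)^{-1/4} ∑_{n=1}^∞ e^{-b n²} sin(b n² x - φ/2), with both series absolutely convergent. -/
/-!
Put `τ = a (x + i) / π` in the upper half-plane. Since `exp (π i n² τ) = e^{-a n²} e^{i a n² x}`,
the left-hand series is `Im ((θ(τ) - 1) / 2)` for Jacobi's theta function `θ`. Moreover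
`-1/τ = b (-x + i) / π` and `-iτ = (a/π) √(1 + x²) e^{-iφ}`, so the transformation law
`θ(-1/τ) = (-iτ)^{1/2} θ(τ)` expresses `θ(τ)` as `√(π/a) (1 + x²)^{-1/4} e^{iφ/2} θ(-1/τ)`;
taking imaginary parts gives the identity. Absolute convergence comes for free,
as summability in `ℝ` is absolute.
-/

open Real

open Complex (I)

lemma Complex.cpow_ofReal_mul_exp_mul_I {R θ : ℝ} (hR : 0 < R) (hθ₁ : -π < θ) (hθ₂ : θ ≤ π)
    (s : ℝ) :
    ((R : ℂ) * Complex.exp (θ * I)) ^ (s : ℂ) =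
      ((R ^ s : ℝ) : ℂ) * Complex.exp ((θ * s : ℝ) * I) := by
  have hlog : Complex.log (Complex.exp (θ * I)) = θ * I := Complex.log_exp (by simpa) (by simpa)
  rw [Complex.cpow_def_of_ne_zero (by simp [hR.ne']),
    Complex.log_ofReal_mul hR (Complex.exp_ne_zero _), hlog, Real.rpow_def_of_pos hR, add_mul,
    Complex.exp_add]
  push_cast
  ring_nf

lemma one_sub_mul_I_eq_sqrt_mul_exp (x : ℝ) :
    (1 - x * I : ℂ) = (√(1 + x ^ 2) : ℝ) * Complex.exp ((-arctan x : ℝ) * I) := by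
  have hs : ((√(1 + x ^ 2) : ℝ) : ℂ) ≠ 0 := by norm_cast; positivity
  rw [Complex.exp_mul_I, ← Complex.ofReal_cos, ← Complex.ofReal_sin, cos_neg, sin_neg, cos_arctan,
    sin_arctan]
  push_cast
  field_simp
  ring

lemma jacobiTheta_neg_inv {τ : ℂ} (hτ : 0 < τ.im) :
    jacobiTheta (-τ)⁻¹ = (-I * τ) ^ (1 / 2 : ℂ) * jacobiTheta τ := by
  have h := jacobiTheta_S_smul ⟨τ, hτ⟩
  rw [UpperHalfPlane.modular_S_smul] at h
  exact h

lemma neg_inv_mul_add_I_div_pi {a : ℝ} (ha : 0 < a) (x : ℝ) :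
    (-(a * (x + I) / π))⁻¹ = ((π ^ 2 / (a * (1 + x ^ 2)) : ℝ) : ℂ) * (-x + I) / π := by
  apply inv_eq_of_mul_eq_one_right
  have hy : ((1 + x ^ 2 : ℝ) : ℂ) ≠ 0 := by exact_mod_cast (by positivity : (0 : ℝ) < 1 + x ^ 2).ne'
  have ha' : (a : ℂ) ≠ 0 := by exact_mod_cast ha.ne'
  push_cast at hy ⊢
  field_simp
  ring_nf
  rw [Complex.I_sq]
  ring

lemma cpow_half_neg_I_mul_mul_add_I_div_pi {a : ℝ} (ha : 0 < a) (x : ℝ) :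
    (-I * (a * (x + I) / π)) ^ (1 / 2 : ℂ) =
      ((√(a / π) * (1 + x ^ 2) ^ (1 / 4 : ℝ) : ℝ) : ℂ) *
        Complex.exp ((-(arctan x / 2) : ℝ) * I) := by
  have hpolar : -I * (a * (x + I) / π) =
      ((a / π * √(1 + x ^ 2) : ℝ) : ℂ) * Complex.exp ((-arctan x : ℝ) * I) := by
    rw [Complex.ofReal_mul, mul_assoc, ← one_sub_mul_I_eq_sqrt_mul_exp]
    push_cast
    field_simp
    ring_nf
    rw [Complex.I_sq]
    ring
  have hhalf : (1 / 2 : ℂ) = ((1 / 2 : ℝ) : ℂ) := by push_cast; rfl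
  rw [hpolar, hhalf, Complex.cpow_ofReal_mul_exp_mul_I (by positivity)
    (by linarith [arctan_lt_pi_div_two x, pi_pos])
    (by linarith [neg_pi_div_two_lt_arctan x, pi_pos]),
    Real.mul_rpow (by positivity) (by positivity), Real.sqrt_eq_rpow, Real.sqrt_eq_rpow,
    ← Real.rpow_mul (by positivity), show (1 / 2 : ℝ) * (1 / 2) = 1 / 4 by norm_num,
    show -arctan x * (1 / 2) = -(arctan x / 2) by ring]

lemma jacobiTheta_mul_add_I_div_pi (a x b : ℝ) (ha : 0 < a)
    (hb : b = π ^ 2 / (a * (1 + x ^ 2))) :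
    jacobiTheta (a * (x + I) / π) =
      ((√(π / a) * (1 + x ^ 2) ^ (-(1 : ℝ) / 4) : ℝ) : ℂ) *
        Complex.exp ((arctan x / 2 : ℝ) * I) * jacobiTheta (b * (-x + I) / π) := by
  have hτ : 0 < (a * (x + I) / π : ℂ).im := by
    simp [Complex.div_im]
    positivity
  have hmod : √(π / a) * (1 + x ^ 2) ^ (-(1 : ℝ) / 4) *
      (√(a / π) * (1 + x ^ 2) ^ (1 / 4 : ℝ)) = 1 := by
    rw [mul_mul_mul_comm, ← Real.sqrt_mul (by positivity), ← Real.rpow_add (by positivity),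
      show π / a * (a / π) = 1 by field_simp, Real.sqrt_one]
    norm_num
  have harg : ((arctan x / 2 : ℝ) : ℂ) * I + ((-(arctan x / 2) : ℝ) : ℂ) * I = 0 := by
    push_cast
    ring
  have hprod : ((√(π / a) * (1 + x ^ 2) ^ (-(1 : ℝ) / 4) : ℝ) : ℂ) *
      Complex.exp ((arctan x / 2 : ℝ) * I) *
      (((√(a / π) * (1 + x ^ 2) ^ (1 / 4 : ℝ) : ℝ) : ℂ) *
        Complex.exp ((-(arctan x / 2) : ℝ) * I)) = 1 := by
    rw [mul_mul_mul_comm, ← Complex.ofReal_mul, hmod, ← Complex.exp_add, harg, Complex.exp_zero,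
      Complex.ofReal_one, one_mul]
  rw [hb, ← neg_inv_mul_add_I_div_pi ha, jacobiTheta_neg_inv hτ,
    cpow_half_neg_I_mul_mul_add_I_div_pi ha]
  linear_combination (-jacobiTheta (a * (x + I) / π)) * hprod

lemma hasSum_exp_mul_sin_of_jacobiTheta (c t ψ : ℝ) (hc : 0 < c) :
    HasSum (fun n : ℕ => rexp (-c * ((n : ℝ) + 1) ^ 2) * sin (c * ((n : ℝ) + 1) ^ 2 * t + ψ))
      (((Complex.exp (ψ * I) * jacobiTheta (c * (t + I) / π)).im - sin ψ) / 2) := by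
  have hτ : 0 < (c * (t + I) / π : ℂ).im := by
    simp [Complex.div_im]
    positivity
  have h := Complex.hasSum_im ((hasSum_nat_jacobiTheta hτ).mul_left (Complex.exp (ψ * I)))
  convert h using 1
  · funext n
    have hexp : (ψ * I + π * I * ((n : ℂ) + 1) ^ 2 * (c * (t + I) / π) : ℂ) =
        ((-c * ((n : ℝ) + 1) ^ 2 : ℝ) : ℂ) + ((c * ((n : ℝ) + 1) ^ 2 * t + ψ : ℝ) : ℂ) * I := by
      push_cast
      field_simp
      ring_nf
      rw [Complex.I_sq]
      ring
    rw [← Complex.exp_add, hexp, Complex.exp_add, ← Complex.ofReal_exp, Complex.im_ofReal_mul,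
      Complex.exp_ofReal_mul_I_im]
  · rw [mul_div_assoc', mul_sub, mul_one, Complex.div_ofNat_im, Complex.sub_im,
      Complex.exp_ofReal_mul_I_im]

theorem stmt_6_general (a x φ b : ℝ) (ha : 0 < a) (hφ : φ = Real.arctan x)
    (hb : b = π ^ 2 / (a * (1 + x ^ 2))) :
    Summable (fun n : ℕ =>
      |Real.exp (-a * ((n : ℝ) + 1) ^ 2) * Real.sin (a * ((n : ℝ) + 1) ^ 2 * x)|) ∧
    Summable (fun n : ℕ =>
      |Real.exp (-b * ((n : ℝ) + 1) ^ 2) * Real.sin (b * ((n : ℝ) + 1) ^ 2 * x - φ / 2)|) ∧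
    ∑' n : ℕ, Real.exp (-a * ((n : ℝ) + 1) ^ 2) * Real.sin (a * ((n : ℝ) + 1) ^ 2 * x) =
      (1 / 2) * Real.sqrt (π / a) * Real.sin (φ / 2) / (1 + x ^ 2) ^ ((1 : ℝ) / 4) -
        Real.sqrt (π / a) * (1 + x ^ 2) ^ (-(1 : ℝ) / 4) *
          ∑' n : ℕ, Real.exp (-b * ((n : ℝ) + 1) ^ 2) *
            Real.sin (b * ((n : ℝ) + 1) ^ 2 * x - φ / 2) := by
  have hb' : 0 < b := by rw [hb]; positivity
  have hL := hasSum_exp_mul_sin_of_jacobiTheta a x 0 ha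
  simp only [add_zero, Complex.ofReal_zero, zero_mul, Complex.exp_zero, one_mul, sin_zero,
    sub_zero] at hL
  have hR := (hasSum_exp_mul_sin_of_jacobiTheta b (-x) (φ / 2) hb').neg
  have hterm : ∀ n : ℕ,
      -(rexp (-b * ((n : ℝ) + 1) ^ 2) * sin (b * ((n : ℝ) + 1) ^ 2 * -x + φ / 2)) =
      rexp (-b * ((n : ℝ) + 1) ^ 2) * sin (b * ((n : ℝ) + 1) ^ 2 * x - φ / 2) := fun n => by
    rw [← mul_neg, ← sin_neg]
    ring_nf
  simp only [hterm, Complex.ofReal_neg] at hR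
  refine ⟨hL.summable.abs, hR.summable.abs, ?_⟩
  rw [hL.tsum_eq, hR.tsum_eq, jacobiTheta_mul_add_I_div_pi a x b ha hb, ← hφ, mul_assoc,
    Complex.im_ofReal_mul, neg_div, Real.rpow_neg (by positivity)]
  ring

theorem stmt_6 (a x φ b : ℝ) (ha : 0 < a) (hx : 0 < x) (hφ : φ = Real.arctan x)
    (hb : b = π ^ 2 / (a * (1 + x ^ 2))) :
    Summable (fun n : ℕ =>
      |Real.exp (-a * ((n : ℝ) + 1) ^ 2) * Real.sin (a * ((n : ℝ) + 1) ^ 2 * x)|) ∧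
    Summable (fun n : ℕ =>
      |Real.exp (-b * ((n : ℝ) + 1) ^ 2) * Real.sin (b * ((n : ℝ) + 1) ^ 2 * x - φ / 2)|) ∧
    ∑' n : ℕ, Real.exp (-a * ((n : ℝ) + 1) ^ 2) * Real.sin (a * ((n : ℝ) + 1) ^ 2 * x) =
      (1 / 2) * Real.sqrt (π / a) * Real.sin (φ / 2) / (1 + x ^ 2) ^ ((1 : ℝ) / 4) -
        Real.sqrt (π / a) * (1 + x ^ 2) ^ (-(1 : ℝ) / 4) *
          ∑' n : ℕ, Real.exp (-b * ((n : ℝ) + 1) ^ 2) *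
            Real.sin (b * ((n : ℝ) + 1) ^ 2 * x - φ / 2) :=
  stmt_6_general a x φ b ha hφ hb
end

section
/- For every real α and every real x with |x| < 1, the series ∑_{r=0}^∞ ((α)_r (α+1/2)_r / ((1/2)_r · r!)) (-x²)^r converges absolutely and equals (1+x²)^{-α} cos(2α arctan x). -/
/-!
By the duplication formulas `(2y)_{2r} = 4^r (y)_r (y + 1/2)_r` and `(2r)! = 4^r (1/2)_r r!`,
the `r`-th term equals `(2α)_{2r} / (2r)! · (ix)^{2r}`. So the series is the even part of the
binomial series `∑ (2α)_n / n! · zⁿ = (1 - z)^{-2α}` at `z = ix`, which converges absolutely for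
`|x| < 1`, and its sum is `((1 - ix)^{-2α} + (1 + ix)^{-2α}) / 2 = Re (1 + ix)^{-2α}`. In polar
form `1 + ix = √(1 + x²) · e^{i arctan x}`, which gives `(1 + x²)^{-α} cos (2α arctan x)`.
-/

open Real Nat

theorem ascPochhammer_eval_two_mul {K : Type*} [Field K] [CharZero K] (y : K) (r : ℕ) :
    (ascPochhammer K (2 * r)).eval (2 * y) =
      4 ^ r * (ascPochhammer K r).eval y * (ascPochhammer K r).eval (y + 1 / 2) := by
  induction r with
  | zero => simp
  | succ r ih =>
    rw [show 2 * (r + 1) = 2 * r + 1 + 1 by ring, ascPochhammer_succ_eval,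
      ascPochhammer_succ_eval, ih, ascPochhammer_succ_eval, ascPochhammer_succ_eval]
    push_cast
    ring

theorem Nat.cast_factorial_two_mul {K : Type*} [Field K] [CharZero K] (r : ℕ) :
    ((2 * r)! : K) = 4 ^ r * (ascPochhammer K r).eval (1 / 2) * r ! := by
  have h := ascPochhammer_eval_two_mul (1 / 2 : K) r
  rwa [mul_one_div_cancel two_ne_zero, ascPochhammer_eval_one, add_halves,
    ascPochhammer_eval_one] at h

theorem ascPochhammer_eval_mul_eval_add_half_div {K : Type*} [Field K] [LinearOrder K]
    [IsStrictOrderedRing K] (y : K) (r : ℕ) :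
    (ascPochhammer K r).eval y * (ascPochhammer K r).eval (y + 1 / 2) /
        ((ascPochhammer K r).eval (1 / 2) * r !) =
      (ascPochhammer K (2 * r)).eval (2 * y) / (2 * r)! := by
  have : (ascPochhammer K r).eval (1 / 2) ≠ 0 := (ascPochhammer_pos r _ (by norm_num)).ne'
  rw [ascPochhammer_eval_two_mul, Nat.cast_factorial_two_mul]
  field_simp

theorem Ring.choose_add_sub_one_eq {K : Type*} [Field K] [CharZero K] (b : K) (n : ℕ) :
    Ring.choose (b + n - 1) n = (ascPochhammer K n).eval b / n ! := by
  rw [← Ring.multichoose_eq, eq_div_iff (Nat.cast_ne_zero.mpr n.factorial_ne_zero), mul_comm,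
    ← nsmul_eq_mul, Ring.factorial_nsmul_multichoose_eq_ascPochhammer,
    Polynomial.ascPochhammer_smeval_eq_eval]

theorem HasSum.even_mul_pow {K : Type*} [Field K] [CharZero K] [TopologicalSpace K]
    [IsTopologicalRing K] {c : ℕ → K} {z s t : K} (hs : HasSum (fun n ↦ c n * z ^ n) s)
    (ht : HasSum (fun n ↦ c n * (-z) ^ n) t) :
    HasSum (fun k ↦ c (2 * k) * z ^ (2 * k)) ((s + t) / 2) := by
  have hodd : ∀ n ∉ Set.range (2 * ·), (c n * z ^ n + c n * (-z) ^ n) / 2 = 0 := by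
    intro n hn
    have : Odd n := Nat.not_even_iff_odd.mp fun ⟨k, hk⟩ ↦ hn ⟨k, by dsimp only; omega⟩
    rw [this.neg_pow]
    ring
  convert ((mul_right_injective₀ two_ne_zero).hasSum_iff hodd).mpr ((hs.add ht).div_const 2)
    using 2 with k
  simp only [Function.comp_apply, (even_two_mul k).neg_pow]
  ring

theorem mem_eball_zero_one_of_norm_lt_one {E : Type*} [SeminormedAddGroup E] {z : E}
    (hz : ‖z‖ < 1) : z ∈ Metric.eball (0 : E) 1 := by
  rw [mem_eball_zero_iff, ← ofReal_norm]
  exact ENNReal.ofReal_lt_one.mpr hz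

namespace Complex

theorem ofReal_ascPochhammer_eval (a : ℝ) (n : ℕ) :
    (((ascPochhammer ℝ n).eval a : ℝ) : ℂ) = (ascPochhammer ℂ n).eval (a : ℂ) := by
  rw [← ascPochhammer_map (algebraMap ℝ ℂ), Polynomial.eval_map_algebraMap]
  exact (Polynomial.aeval_algebraMap_apply_eq_algebraMap_eval a _).symm

theorem hasFPowerSeriesOnBall_one_sub_cpow_neg (b : ℂ) :
    HasFPowerSeriesOnBall (fun z ↦ (1 - z) ^ (-b))
      (.ofScalars ℂ fun n ↦ (ascPochhammer ℂ n).eval b / n !) 0 1 := by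
  simpa only [one_div, ← cpow_neg, Ring.choose_add_sub_one_eq] using
    one_div_one_sub_cpow_hasFPowerSeriesOnBall_zero b

theorem hasSum_ascPochhammer_mul_pow (b : ℂ) {z : ℂ} (hz : ‖z‖ < 1) :
    HasSum (fun n ↦ (ascPochhammer ℂ n).eval b / n ! * z ^ n) ((1 - z) ^ (-b)) := by
  simpa [FormalMultilinearSeries.ofScalars_apply_eq, mul_comm] using
    (hasFPowerSeriesOnBall_one_sub_cpow_neg b).hasSum (mem_eball_zero_one_of_norm_lt_one hz)

theorem summable_norm_ascPochhammer_mul_pow (b : ℂ) {z : ℂ} (hz : ‖z‖ < 1) :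
    Summable fun n ↦ ‖(ascPochhammer ℂ n).eval b / n ! * z ^ n‖ := by
  simpa [FormalMultilinearSeries.ofScalars_apply_eq, mul_comm] using
    FormalMultilinearSeries.summable_norm_apply _
      (Metric.eball_subset_eball (hasFPowerSeriesOnBall_one_sub_cpow_neg b).r_le
        (mem_eball_zero_one_of_norm_lt_one hz))

theorem ascPochhammer_two_mul_div_factorial_mul_pow (α x : ℝ) (r : ℕ) :
    (ascPochhammer ℂ (2 * r)).eval (2 * α : ℂ) / (2 * r)! * (x * I) ^ (2 * r) =
      (((ascPochhammer ℝ r).eval α * (ascPochhammer ℝ r).eval (α + 1 / 2) /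
        ((ascPochhammer ℝ r).eval (1 / 2) * r !) * (-x ^ 2) ^ r : ℝ) : ℂ) := by
  rw [ascPochhammer_eval_mul_eval_add_half_div, pow_mul, mul_pow, I_sq]
  push_cast [ofReal_ascPochhammer_eval]
  ring

theorem norm_one_add_mul_I (x : ℝ) : ‖1 + x * I‖ = √(1 + x ^ 2) := by
  simpa using norm_add_mul_I 1 x

theorem arg_one_add_mul_I (x : ℝ) : arg (1 + x * I) = Real.arctan x := by
  rw [arg_of_re_nonneg (by simp), norm_one_add_mul_I, Real.arctan_eq_arcsin]
  simp

theorem re_one_add_mul_I_cpow (x c : ℝ) :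
    ((1 + x * I) ^ (c : ℂ)).re = (1 + x ^ 2) ^ (c / 2) * Real.cos (c * Real.arctan x) := by
  rw [cpow_ofReal_re, arg_one_add_mul_I, norm_one_add_mul_I, Real.sqrt_eq_rpow,
    ← Real.rpow_mul (by positivity), one_div_mul_eq_div, mul_comm (Real.arctan x)]

theorem re_one_sub_mul_I_cpow_add_one_add_mul_I_cpow (x c : ℝ) :
    ((1 - x * I) ^ (c : ℂ) + (1 + x * I) ^ (c : ℂ)).re =
      2 * ((1 + x ^ 2) ^ (c / 2) * Real.cos (c * Real.arctan x)) := by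
  have h : (1 : ℂ) - x * I = 1 + ((-x : ℝ) : ℂ) * I := by push_cast; ring
  rw [h, add_re, re_one_add_mul_I_cpow, re_one_add_mul_I_cpow, Real.arctan_neg, neg_sq, mul_neg,
    Real.cos_neg]
  ring

end Complex

theorem stmt_10 (α x : ℝ) (hx : |x| < 1) :
    Summable (fun r : ℕ =>
      |(ascPochhammer ℝ r).eval α * (ascPochhammer ℝ r).eval (α + 1 / 2) /
        ((ascPochhammer ℝ r).eval (1 / 2) * (Nat.factorial r)) * (-x ^ 2) ^ r|) ∧
    ∑' r : ℕ, (ascPochhammer ℝ r).eval α * (ascPochhammer ℝ r).eval (α + 1 / 2) /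
        ((ascPochhammer ℝ r).eval (1 / 2) * (Nat.factorial r)) * (-x ^ 2) ^ r =
      (1 + x ^ 2) ^ (-α) * Real.cos (2 * α * Real.arctan x) := by
  have hz : ‖(x : ℂ) * Complex.I‖ < 1 := by simpa using hx
  have hz' : ‖-((x : ℂ) * Complex.I)‖ < 1 := by rwa [norm_neg]
  refine ⟨?_, ?_⟩
  · simpa only [Complex.ascPochhammer_two_mul_div_factorial_mul_pow, Function.comp_def,
      Complex.norm_real, Real.norm_eq_abs] using
      (Complex.summable_norm_ascPochhammer_mul_pow (2 * α) hz).comp_injective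
        (mul_right_injective₀ two_ne_zero)
  · have heven := (Complex.hasSum_ascPochhammer_mul_pow (2 * α) hz).even_mul_pow
      (Complex.hasSum_ascPochhammer_mul_pow (2 * α) hz')
    simp only [Complex.ascPochhammer_two_mul_div_factorial_mul_pow] at heven
    have hre := Complex.hasSum_re heven
    have hb : -(2 * (α : ℂ)) = ((-(2 * α) : ℝ) : ℂ) := by push_cast; ring
    rw [sub_neg_eq_add, hb, Complex.div_ofNat_re,
      Complex.re_one_sub_mul_I_cpow_add_one_add_mul_I_cpow] at hre
    simp only [Complex.ofReal_re] at hre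
    rw [hre.tsum_eq, neg_mul, Real.cos_neg]
    ring_nf
end

section
/- For every natural number k and every real x, ∑_{r=0}^{k} ((-k)_r (-k-1/2)_r / ((1/2)_r · r!)) (-x²)^r = (1+x²)^{k+1/2} cos((2k+1) arctan x). -/
/-!
The duplication formula `4 ^ r (a)_r (a + 1/2)_r = (2a)_{2r}` for Pochhammer symbols turns the
`r`-th coefficient into `choose (2k+1) (2r)`, so the left side is the even part of the binomial
expansion of `(1 + ix)^(2k+1)`, i.e. its real part. Since `1 + ix = √(1+x²) e^{i arctan x}`, that
real part is `(1+x²)^(k+1/2) cos((2k+1) arctan x)`.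
-/

open Real Finset Polynomial

theorem ascPochhammer_eval_mul_eval_add_half {K : Type*} [Field K] [NeZero (2 : K)]
    (a : K) (r : ℕ) :
    4 ^ r * ((ascPochhammer K r).eval a * (ascPochhammer K r).eval (a + 1 / 2)) =
      (ascPochhammer K (2 * r)).eval (2 * a) := by
  induction r with
  | zero => simp
  | succ r ih =>
    rw [Nat.mul_succ, ascPochhammer_succ_eval, ascPochhammer_succ_eval, ascPochhammer_succ_eval,
      ascPochhammer_succ_eval, ← ih]
    push_cast
    field_simp
    ring

theorem ascPochhammer_eval_half_mul_factorial {K : Type*} [Field K] [NeZero (2 : K)] (r : ℕ) :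
    4 ^ r * ((ascPochhammer K r).eval (1 / 2) * r.factorial) = (2 * r).factorial := by
  have h := ascPochhammer_eval_mul_eval_add_half (1 / 2 : K) r
  rw [add_halves, mul_one_div_cancel two_ne_zero] at h
  simpa using h

theorem ascPochhammer_eval_neg_mul_eval_neg_sub_half {K : Type*} [Field K] [NeZero (2 : K)]
    (k r : ℕ) :
    4 ^ r * ((ascPochhammer K r).eval (-(k : K)) * (ascPochhammer K r).eval (-(k : K) - 1 / 2)) =
      (2 * k + 1).descFactorial (2 * r) := by
  have h := ascPochhammer_eval_mul_eval_add_half (-(k : K) - 1 / 2) r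
  have h2k : 2 * (-(k : K) - 1 / 2) = -((2 * k + 1 : ℕ) : K) := by
    push_cast
    field_simp
    ring
  rw [sub_add_cancel, h2k, ascPochhammer_eval_neg_eq_descPochhammer K ((2 * k + 1 : ℕ) : K),
    descPochhammer_eval_eq_descFactorial, pow_mul, neg_one_sq, one_pow, one_mul] at h
  rw [mul_comm (eval (-(k : K)) _), h]

theorem ascPochhammer_eval_ratio_eq_choose {K : Type*} [Field K] [CharZero K] (k r : ℕ) :
    (ascPochhammer K r).eval (-(k : K)) * (ascPochhammer K r).eval (-(k : K) - 1 / 2) /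
        ((ascPochhammer K r).eval (1 / 2) * r.factorial) = (2 * k + 1).choose (2 * r) := by
  have h4 : (4 : K) ^ r ≠ 0 := pow_ne_zero _ (by norm_num)
  rw [← mul_div_mul_left _ _ h4, ascPochhammer_eval_neg_mul_eval_neg_sub_half,
    ascPochhammer_eval_half_mul_factorial, Nat.descFactorial_eq_factorial_mul_choose,
    Nat.cast_mul, mul_div_cancel_left₀ _ (Nat.cast_ne_zero.2 (Nat.factorial_ne_zero _))]

theorem Finset.sum_range_two_mul {M : Type*} [AddCommMonoid M] (f : ℕ → M) (m : ℕ) :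
    ∑ j ∈ range (2 * m), f j = ∑ r ∈ range m, (f (2 * r) + f (2 * r + 1)) := by
  induction m with
  | zero => simp
  | succ m ih => rw [Nat.mul_succ, sum_range_succ, sum_range_succ, sum_range_succ, ih, add_assoc]

namespace Complex

theorem one_add_ofReal_mul_I_eq (x : ℝ) :
    1 + x * I = √(1 + x ^ 2) * exp (Real.arctan x * I) := by
  have hsqrt : (√(1 + x ^ 2) : ℂ) ≠ 0 := ofReal_ne_zero.2 (Real.sqrt_pos.2 (by positivity)).ne'
  rw [exp_mul_I, ← ofReal_cos, ← ofReal_sin, Real.cos_arctan, Real.sin_arctan]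
  push_cast
  field_simp

theorem re_one_add_ofReal_mul_I_pow (x : ℝ) (n : ℕ) :
    ((1 + x * I) ^ n).re = √(1 + x ^ 2) ^ n * Real.cos (n * Real.arctan x) := by
  rw [one_add_ofReal_mul_I_eq, mul_pow, ← exp_nat_mul, ← ofReal_pow, re_ofReal_mul,
    ← mul_assoc, ← ofReal_natCast, ← ofReal_mul, exp_ofReal_mul_I_re]

theorem re_one_add_ofReal_mul_I_pow_eq_sum (x : ℝ) {n m : ℕ} (h : n < 2 * m) :
    ((1 + x * I) ^ n).re = ∑ r ∈ range m, (n.choose (2 * r) * (-x ^ 2) ^ r : ℝ) := by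
  have hbinom : (1 + x * I) ^ n = ∑ j ∈ range (2 * m), (x * I) ^ j * (n.choose j : ℂ) := by
    rw [add_comm, add_pow]
    simp only [one_pow, mul_one]
    refine sum_subset (range_subset_range.2 h) fun j _ hj => ?_
    rw [Nat.choose_eq_zero_of_lt (by simpa using hj), Nat.cast_zero, mul_zero]
  have heven (r : ℕ) : (x * I : ℂ) ^ (2 * r) = ((-x ^ 2) ^ r : ℝ) := by
    rw [pow_mul, mul_pow, I_sq]
    push_cast
    ring
  rw [hbinom, re_sum, sum_range_two_mul]
  refine sum_congr rfl fun r _ => ?_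
  rw [pow_succ, heven]
  simp only [mul_re, mul_im, ofReal_re, ofReal_im, I_re, I_im, natCast_re, natCast_im]
  ring

end Complex

theorem stmt_12 (k : ℕ) (x : ℝ) :
    ∑ r ∈ Finset.range (k + 1),
        (ascPochhammer ℝ r).eval (-(k : ℝ)) * (ascPochhammer ℝ r).eval (-(k : ℝ) - 1 / 2) /
          ((ascPochhammer ℝ r).eval (1 / 2) * (Nat.factorial r)) * (-x ^ 2) ^ r =
      (1 + x ^ 2) ^ ((k : ℝ) + 1 / 2) * Real.cos ((2 * (k : ℝ) + 1) * Real.arctan x) := by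
  have hsqrt : √(1 + x ^ 2) ^ (2 * k + 1) = (1 + x ^ 2) ^ ((k : ℝ) + 1 / 2) := by
    rw [Real.sqrt_eq_rpow, ← Real.rpow_natCast, ← Real.rpow_mul (by positivity)]
    push_cast
    ring_nf
  simp_rw [ascPochhammer_eval_ratio_eq_choose]
  rw [← Complex.re_one_add_ofReal_mul_I_pow_eq_sum x (by omega : 2 * k + 1 < 2 * (k + 1)),
    Complex.re_one_add_ofReal_mul_I_pow, hsqrt, Nat.cast_add_one, Nat.cast_mul, Nat.cast_ofNat]
end

section
/- Fix x > 0 and set φ = arctan x. There exists a constant C > 0 such that for all 0 < a ≤ 1, |∑_{n=1}^∞ e^{-an²} cos(an²x) - (1/2)√(π/a) · cos(φ/2)/(1+x²)^{1/4} + 1/2| ≤ C a^{-1/2} exp(-π²/(a(1+x²))); in particular, for p = 2 the correction to the algebraic part of the expansion is exponentially small as a → 0⁺. -/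
open Real

open Complex (I arg)

/-! The term `e^{-an²} cos(an²x)` is the real part of `e^{-π n² u}` with `u = (a/π)(1 + ix)`, so the
series is `Re ((θ(iu) - 1)/2)` for Jacobi's theta function. The transformation
`θ(iu) = u^{-1/2} θ(i/u)` splits off the algebraic part `Re (u^{-1/2} - 1)/2`, which is
`½ √(π/a) cos(φ/2) / (1+x²)^{1/4} - ½` because `arg u = arctan x`. What remains,
`u^{-1/2} (θ(i/u) - 1)/2`, is `O(|u|^{-1/2} e^{-π Im(i/u)})` with `π Im(i/u) = π²/(a(1+x²))`. -/

theorem Complex.arg_one_add_mul_I_s15 (x : ℝ) : arg (1 + x * I) = Real.arctan x := by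
  have hmem : arg (1 + x * I) ∈ Set.Ioo (-(π / 2)) (π / 2) := by
    rw [Set.mem_Ioo, ← abs_lt]
    exact Complex.abs_arg_lt_pi_div_two_iff.mpr (Or.inl (by simp))
  rw [← Real.arctan_tan hmem.1 hmem.2, Complex.tan_arg]
  simp

theorem jacobiTheta_I_mul {u : ℂ} (hu : 0 < u.re) :
    jacobiTheta (I * u) = u ^ ((-1 / 2 : ℝ) : ℂ) * jacobiTheta (I / u) := by
  have hu0 : u ≠ 0 := fun h => by simp [h] at hu
  have hS := jacobiTheta_S_smul ⟨I * u, by simpa using hu⟩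
  rw [UpperHalfPlane.modular_S_smul, UpperHalfPlane.coe_mk] at hS
  have hS' : jacobiTheta (I / u) = u ^ (1 / 2 : ℂ) * jacobiTheta (I * u) := by
    convert hS using 2
    · field_simp; simp
    · ring_nf; simp
  have hv : u ^ (1 / 2 : ℂ) ≠ 0 := by simp [Complex.cpow_eq_zero_iff, hu0]
  rw [hS', show ((-1 / 2 : ℝ) : ℂ) = -(1 / 2) by push_cast; ring, Complex.cpow_neg,
    inv_mul_cancel_left₀ hv]

theorem hasSum_cexp_neg_pi_mul_sq {u : ℂ} (hu : 0 < u.re) :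
    HasSum (fun n : ℕ => Complex.exp (-π * u * ((n : ℂ) + 1) ^ 2))
      ((jacobiTheta (I * u) - 1) / 2) := by
  convert hasSum_nat_jacobiTheta (τ := I * u) (by simpa using hu) using 3 with n
  ring_nf
  simp only [Complex.I_sq]
  ring

theorem norm_jacobiTheta_I_mul_sub_le {u : ℂ} (hu : 0 < u.re) :
    ‖(jacobiTheta (I * u) - 1) / 2 - (u ^ ((-1 / 2 : ℝ) : ℂ) - 1) / 2‖ ≤
      ‖u‖ ^ (-1 / 2 : ℝ) * (1 / (1 - exp (-π * u⁻¹.re)) * exp (-π * u⁻¹.re)) := by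
  have him : (I / u).im = u⁻¹.re := by rw [div_eq_mul_inv, Complex.I_mul_im]
  have hu' : 0 < (I / u).im := by
    rw [him, Complex.inv_re]; exact div_pos hu (Complex.normSq_pos.mpr fun h => by simp [h] at hu)
  have hθ := norm_jacobiTheta_sub_one_le hu'
  rw [him] at hθ
  calc ‖(jacobiTheta (I * u) - 1) / 2 - (u ^ ((-1 / 2 : ℝ) : ℂ) - 1) / 2‖
      = ‖u ^ ((-1 / 2 : ℝ) : ℂ)‖ * ‖jacobiTheta (I / u) - 1‖ / 2 := by
        rw [jacobiTheta_I_mul hu, ← norm_mul, ← sub_div, norm_div, Complex.norm_two]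
        ring_nf
    _ ≤ ‖u‖ ^ (-1 / 2 : ℝ) * (2 / (1 - exp (-π * u⁻¹.re)) * exp (-π * u⁻¹.re)) / 2 := by
        rw [Complex.norm_cpow_real]; gcongr
    _ = _ := by ring

theorem norm_ofReal_mul_one_add_mul_I {r : ℝ} (hr : 0 ≤ r) (x : ℝ) :
    ‖(r : ℂ) * (1 + x * I)‖ = r * √(1 + x ^ 2) := by
  rw [norm_mul, Complex.norm_of_nonneg hr, Complex.norm_def, Complex.normSq_apply]
  simp [sq]

theorem inv_re_ofReal_mul_one_add_mul_I (r x : ℝ) :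
    ((r : ℂ) * (1 + x * I))⁻¹.re = 1 / (r * (1 + x ^ 2)) := by
  rw [Complex.inv_re, Complex.normSq_apply]
  simp only [Complex.mul_re, Complex.ofReal_re, Complex.add_re, Complex.one_re, Complex.I_re,
    mul_zero, Complex.ofReal_im, Complex.I_im, mul_one, sub_self, add_zero, Complex.add_im,
    Complex.one_im, Complex.mul_im, zero_add, zero_mul, sub_zero, one_div, mul_inv_rev]
  field_simp

theorem rpow_neg_half_mul_sqrt {r s : ℝ} (hr : 0 ≤ r) (hs : 0 ≤ s) :
    (r * √s) ^ (-1 / 2 : ℝ) = √r⁻¹ / s ^ (1 / 4 : ℝ) := by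
  rw [mul_rpow hr (sqrt_nonneg s), sqrt_eq_rpow, sqrt_eq_rpow, ← rpow_mul hs,
    show (1 / 2 * (-1 / 2) : ℝ) = -(1 / 4) by norm_num, show (-1 / 2 : ℝ) = -(1 / 2) by ring,
    rpow_neg hr, inv_rpow hr, rpow_neg hs]
  exact (div_eq_mul_inv _ _).symm

theorem one_sub_exp_neg_pos {c : ℝ} (hc : 0 < c) : 0 < 1 - exp (-c) := by
  simpa using hc

theorem one_div_one_sub_exp_neg_le_of_le {c₀ c : ℝ} (hc₀ : 0 < c₀) (h : c₀ ≤ c) :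
    1 / (1 - exp (-c)) ≤ 1 / (1 - exp (-c₀)) := by
  have := one_sub_exp_neg_pos hc₀
  gcongr

theorem re_cexp_neg_pi_mul_one_add_mul_I (a x m : ℝ) :
    (Complex.exp (-π * (((a / π : ℝ) : ℂ) * (1 + x * I)) * m)).re =
      exp (-a * m) * cos (a * m * x) := by
  have h : -π * (((a / π : ℝ) : ℂ) * (1 + x * I)) * m =
      ((-a * m : ℝ) : ℂ) + ((-(a * m * x) : ℝ) : ℂ) * I := by
    push_cast
    field_simp [Complex.ofReal_ne_zero.mpr pi_ne_zero]
    ring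
  rw [h, Complex.exp_re]
  simp [cos_neg]

theorem tsum_exp_mul_cos_eq_re_jacobiTheta {a : ℝ} (ha : 0 < a) (x : ℝ) :
    ∑' n : ℕ, exp (-a * ((n : ℝ) + 1) ^ 2) * cos (a * ((n : ℝ) + 1) ^ 2 * x) =
      ((jacobiTheta (I * (((a / π : ℝ) : ℂ) * (1 + x * I))) - 1) / 2).re := by
  rw [← (Complex.hasSum_re (hasSum_cexp_neg_pi_mul_sq (by simp; positivity))).tsum_eq]
  refine tsum_congr fun n => ?_
  rw [← re_cexp_neg_pi_mul_one_add_mul_I]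
  simp only [Complex.ofReal_pow, Complex.ofReal_add, Complex.ofReal_natCast, Complex.ofReal_one]

theorem norm_ofReal_mul_one_add_mul_I_rpow_neg_half {a : ℝ} (ha : 0 < a) (x : ℝ) :
    ‖((a / π : ℝ) : ℂ) * (1 + x * I)‖ ^ (-1 / 2 : ℝ) = √(π / a) / (1 + x ^ 2) ^ (1 / 4 : ℝ) := by
  rw [norm_ofReal_mul_one_add_mul_I (by positivity), rpow_neg_half_mul_sqrt (by positivity)
    (by positivity), inv_div]

theorem re_cpow_neg_half_sub_one_div_two {a : ℝ} (ha : 0 < a) (x : ℝ) :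
    (((((a / π : ℝ) : ℂ) * (1 + x * I)) ^ ((-1 / 2 : ℝ) : ℂ) - 1) / 2).re =
      1 / 2 * √(π / a) * cos (arctan x / 2) / (1 + x ^ 2) ^ (1 / 4 : ℝ) - 1 / 2 := by
  have harg : arg (((a / π : ℝ) : ℂ) * (1 + x * I)) * (-1 / 2) = -(arctan x / 2) := by
    rw [Complex.arg_real_mul _ (by positivity), Complex.arg_one_add_mul_I_s15]; ring
  simp only [Complex.div_ofNat_re, Complex.sub_re, Complex.one_re, Complex.cpow_ofReal_re,
    norm_ofReal_mul_one_add_mul_I_rpow_neg_half ha, harg, cos_neg]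
  ring

theorem norm_jacobiTheta_remainder_le {a : ℝ} (ha : 0 < a) (ha1 : a ≤ 1) (x : ℝ) :
    ‖(jacobiTheta (I * (((a / π : ℝ) : ℂ) * (1 + x * I))) - 1) / 2 -
        ((((a / π : ℝ) : ℂ) * (1 + x * I)) ^ ((-1 / 2 : ℝ) : ℂ) - 1) / 2‖ ≤
      √π / (1 - exp (-(π ^ 2 / (1 + x ^ 2)))) * a ^ (-1 / 2 : ℝ) *
        exp (-(π ^ 2 / (a * (1 + x ^ 2)))) := by
  set u : ℂ := ((a / π : ℝ) : ℂ) * (1 + x * I)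
  have hx2 : 1 ≤ 1 + x ^ 2 := by nlinarith
  have hnorm : ‖u‖ ^ (-1 / 2 : ℝ) ≤ √π * a ^ (-1 / 2 : ℝ) := by
    rw [norm_ofReal_mul_one_add_mul_I_rpow_neg_half ha, sqrt_div pi_pos.le, sqrt_eq_rpow a,
      show (-1 / 2 : ℝ) = -(1 / 2) by ring, rpow_neg ha.le, ← div_eq_mul_inv]
    exact div_le_self (by positivity) (one_le_rpow hx2 (by norm_num))
  have hexp : -π * u⁻¹.re = -(π ^ 2 / (a * (1 + x ^ 2))) := by
    rw [inv_re_ofReal_mul_one_add_mul_I]; field_simp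
  have hdenom : 1 / (1 - exp (-(π ^ 2 / (a * (1 + x ^ 2))))) ≤
      1 / (1 - exp (-(π ^ 2 / (1 + x ^ 2)))) :=
    one_div_one_sub_exp_neg_le_of_le (by positivity) (by gcongr; nlinarith)
  have hpos := one_sub_exp_neg_pos (c := π ^ 2 / (a * (1 + x ^ 2))) (by positivity)
  calc _ ≤ ‖u‖ ^ (-1 / 2 : ℝ) * (1 / (1 - exp (-π * u⁻¹.re)) * exp (-π * u⁻¹.re)) :=
        norm_jacobiTheta_I_mul_sub_le (by simp [u]; positivity)
    _ ≤ √π * a ^ (-1 / 2 : ℝ) * (1 / (1 - exp (-(π ^ 2 / (1 + x ^ 2)))) *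
          exp (-(π ^ 2 / (a * (1 + x ^ 2))))) := by rw [hexp]; gcongr
    _ = _ := by ring

theorem stmt_15_general (x φ : ℝ) (hφ : φ = Real.arctan x) :
    ∃ C : ℝ, 0 < C ∧ ∀ a : ℝ, 0 < a → a ≤ 1 →
      |(∑' n : ℕ, Real.exp (-a * ((n : ℝ) + 1) ^ 2) * Real.cos (a * ((n : ℝ) + 1) ^ 2 * x)) -
          (1 / 2) * Real.sqrt (π / a) * Real.cos (φ / 2) / (1 + x ^ 2) ^ ((1 : ℝ) / 4) +
          1 / 2| ≤
        C * a ^ (-(1 : ℝ) / 2) * Real.exp (-π ^ 2 / (a * (1 + x ^ 2))) := by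
  refine ⟨√π / (1 - exp (-(π ^ 2 / (1 + x ^ 2)))),
    div_pos (sqrt_pos.mpr pi_pos) (one_sub_exp_neg_pos (by positivity)), fun a ha ha1 => ?_⟩
  rw [tsum_exp_mul_cos_eq_re_jacobiTheta ha, hφ, neg_div _ (π ^ 2), sub_add,
    ← re_cpow_neg_half_sub_one_div_two ha, ← Complex.sub_re]
  exact (Complex.abs_re_le_norm _).trans (norm_jacobiTheta_remainder_le ha ha1 x)

theorem stmt_15 (x φ : ℝ) (hx : 0 < x) (hφ : φ = Real.arctan x) :
    ∃ C : ℝ, 0 < C ∧ ∀ a : ℝ, 0 < a → a ≤ 1 →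
      |(∑' n : ℕ, Real.exp (-a * ((n : ℝ) + 1) ^ 2) * Real.cos (a * ((n : ℝ) + 1) ^ 2 * x)) -
          (1 / 2) * Real.sqrt (π / a) * Real.cos (φ / 2) / (1 + x ^ 2) ^ ((1 : ℝ) / 4) +
          1 / 2| ≤
        C * a ^ (-(1 : ℝ) / 2) * Real.exp (-π ^ 2 / (a * (1 + x ^ 2))) :=
  stmt_15_general x φ hφ
end
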